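/- Subject reduction is equivalent to abstraction typability inversion: in the type system induced by an intersection type theory 𝒯, (M →_β M' and Γ ⊢ M : A imply Γ ⊢ M' : A) holds if and only if (Γ ⊢ λx.N : B → C implies Γ, x:B ⊢ N : C). -/
import Mathlib


/-- Pure λ-terms with variables named by natural numbers. -/
inductive Tm : Type
  | var : ℕ → Tm
  | lam : ℕ → Tm → Tm
  | app : Tm → Tm → Tm
deriving DecidableEq

namespace Tm

/-- Free variables of a term. -/
def fv : Tm → Finset ℕ
  | var x => {x}
  | lam x t => fv t \ {x}
  | app t u => fv t ∪ fv u

/-- A variable fresh for a given finite set of variables. -/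
def fresh (s : Finset ℕ) : ℕ := (s.sup id) + 1

/-- Capture-avoiding simultaneous substitution. -/
def subst (σ : ℕ → Tm) : Tm → Tm
  | var x => σ x
  | app t u => app (subst σ t) (subst σ u)
  | lam x t =>
      let y := fresh ((fv t \ {x}).biUnion fun z => fv (σ z))
      lam y (subst (fun z => if z = x then var y else σ z) t)

/-- `M[x := N]`. -/
def subst1 (x : ℕ) (N M : Tm) : Tm :=
  subst (fun z => if z = x then N else var z) M

/-- `λx₁…xₙ. t`. -/
def lams (xs : List ℕ) (t : Tm) : Tm := xs.foldr lam t

/-- `t M₁ ⋯ Mₘ`. -/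
def apps (t : Tm) (ts : List Tm) : Tm := ts.foldl app t

/-- One-step β-reduction: contextual closure of the β-rule. -/
inductive Step : Tm → Tm → Prop
  | beta (x : ℕ) (M N : Tm) : Step (app (lam x M) N) (subst1 x N M)
  | appL {M M' : Tm} (N : Tm) : Step M M' → Step (app M N) (app M' N)
  | appR (M : Tm) {N N' : Tm} : Step N N' → Step (app M N) (app M N')
  | abs (x : ℕ) {M M' : Tm} : Step M M' → Step (lam x M) (lam x M')

/-- β-reduction: reflexive-transitive closure of one-step β-reduction. -/
def Red : Tm → Tm → Prop := Relation.ReflTransGen Step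

/-- β-convertibility: the equivalence relation generated by β-reduction. -/
def Conv : Tm → Tm → Prop := Relation.EqvGen Step

/-- `M` is solvable if `(λx⃗.M) N₁ ⋯ Nₙ` β-reduces to the identity,
where `x⃗` covers the free variables of `M`. -/
def Solvable (M : Tm) : Prop :=
  ∃ (xs : List ℕ) (Ns : List Tm) (y : ℕ),
    M.fv ⊆ xs.toFinset ∧ Red (apps (lams xs M) Ns) (lam y (var y))

/-- One-step head reduction: contraction of the head redex. -/
inductive HeadStep : Tm → Tm → Prop
  | beta (x : ℕ) (M N : Tm) (Ms : List Tm) :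
      HeadStep (apps (app (lam x M) N) Ms) (apps (subst1 x N M) Ms)
  | abs (x : ℕ) {M M' : Tm} : HeadStep M M' → HeadStep (lam x M) (lam x M')

end Tm

/-- Intersection types over a set `A` of constants, with top `𝖴`. -/
inductive Ty (A : Type) : Type
  | const : A → Ty A
  | top : Ty A
  | arrow : Ty A → Ty A → Ty A
  | inter : Ty A → Ty A → Ty A
deriving DecidableEq

/-- An intersection type theory: a subtyping relation on `Ty A` closed under
(Refl), (IncL), (IncR), (𝖴top), (Glb), (Trans) and (→∼). -/
structure ITT (A : Type) where
  le : Ty A → Ty A → Prop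
  le_refl : ∀ a, le a a
  le_incL : ∀ a b, le (Ty.inter b a) b
  le_incR : ∀ a b, le (Ty.inter b a) a
  le_top : ∀ a, le a Ty.top
  le_glb : ∀ {a b c}, le c a → le c b → le c (Ty.inter a b)
  le_trans : ∀ {a b c}, le a b → le b c → le a c
  arrow_cong : ∀ {a a' b b'}, le a a' → le a' a → le b b' → le b' b →
      le (Ty.arrow a b) (Ty.arrow a' b')

variable {A : Type}

/-- The equivalence `∼` induced by the subtyping. -/
def ITT.eqv (T : ITT A) (a b : Ty A) : Prop := T.le a b ∧ T.le b a

/-- Bases: (partial) mappings from term variables to types. -/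
def Ctx (A : Type) := ℕ → Option (Ty A)

def Ctx.empty : Ctx A := fun _ => none

/-- `Γ, x:a`. -/
def Ctx.update (Γ : Ctx A) (x : ℕ) (a : Ty A) : Ctx A :=
  fun y => if y = x then some a else Γ y

/-- The intersection type assignment system induced by an itt `T`:
rules (Ax), (𝖴), (→I), (→E), (∩I) and (≤). -/
inductive Der (T : ITT A) : Ctx A → Tm → Ty A → Prop
  | ax {Γ : Ctx A} {x a} : Γ x = some a → Der T Γ (Tm.var x) a
  | top {Γ M} : Der T Γ M Ty.top
  | arrI {Γ : Ctx A} {x M a b} :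
      Der T (Γ.update x b) M a → Der T Γ (Tm.lam x M) (Ty.arrow b a)
  | arrE {Γ M N a b} :
      Der T Γ M (Ty.arrow b a) → Der T Γ N b → Der T Γ (Tm.app M N) a
  | interI {Γ M a b} : Der T Γ M a → Der T Γ M b → Der T Γ M (Ty.inter a b)
  | sub {Γ M a b} : Der T Γ M a → T.le a b → Der T Γ M b

/-- Finite intersection `⋂_{i∈I} Aᵢ`, with `⋂_∅ = 𝖴`. -/
def interList : List (Ty A) → Ty A
  | [] => Ty.top
  | a :: l => Ty.inter a (interList l)

lemma Tm.fresh_not_mem (s : Finset ℕ) : Tm.fresh s ∉ s := by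
  intro h
  have h1 : id (Tm.fresh s) ≤ s.sup id := Finset.le_sup h
  simp only [Tm.fresh, id] at h1
  omega

lemma der_agree {T : ITT A} : ∀ {Γ M a}, Der T Γ M a →
    ∀ Δ : Ctx A, (∀ z ∈ Tm.fv M, Γ z = Δ z) → Der T Δ M a := by
  intro Γ M a h
  induction h with
  | ax hx =>
    rename_i x a
    intro Δ hΔ
    exact Der.ax (by rw [← hΔ x (by simp [Tm.fv])]; exact hx)
  | top => intro Δ _; exact Der.top
  | arrI h ih =>
    rename_i x M a b
    intro Δ hΔ
    refine Der.arrI (ih _ ?_)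
    intro z hz
    by_cases hzx : z = x
    · simp [Ctx.update, hzx]
    · simp only [Ctx.update, if_neg hzx]
      exact hΔ z (by simp [Tm.fv, hz, hzx])
  | arrE h1 h2 ih1 ih2 =>
    intro Δ hΔ
    exact Der.arrE (ih1 _ fun z hz => hΔ z (by simp [Tm.fv, hz]))
      (ih2 _ fun z hz => hΔ z (by simp [Tm.fv, hz]))
  | interI h1 h2 ih1 ih2 => intro Δ hΔ; exact Der.interI (ih1 _ hΔ) (ih2 _ hΔ)
  | sub h hle ih => intro Δ hΔ; exact Der.sub (ih _ hΔ) hle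

lemma der_subst {T : ITT A} : ∀ {Γ M a}, Der T Γ M a →
    ∀ (σ : ℕ → Tm) (Δ : Ctx A),
      (∀ z b, z ∈ Tm.fv M → Γ z = some b → Der T Δ (σ z) b) →
      Der T Δ (Tm.subst σ M) a := by
  intro Γ M a h
  induction h with
  | ax hx =>
    rename_i x a
    intro σ Δ hσ
    exact hσ x a (by simp [Tm.fv]) hx
  | top => intro σ Δ _; exact Der.top
  | arrI h ih =>
    rename_i x M a b
    intro σ Δ hσ
    simp only [Tm.subst]
    refine Der.arrI (ih _ _ ?_)
    intro z b' hz hzb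
    by_cases hzx : z = x
    · subst hzx
      simp only [Ctx.update, if_pos rfl] at hzb
      injection hzb with hb; subst hb
      simp only [if_pos rfl]
      exact Der.ax (by simp [Ctx.update])
    · simp only [Ctx.update, if_neg hzx] at hzb
      simp only [if_neg hzx]
      refine der_agree (hσ z b' (by simp [Tm.fv, hz, hzx]) hzb) _ ?_
      intro w hw
      have hwmem : w ∈ (Tm.fv M \ {x}).biUnion fun z => Tm.fv (σ z) :=
        Finset.mem_biUnion.2 ⟨z, by simp [hz, hzx], hw⟩
      have hwy : w ≠ Tm.fresh ((Tm.fv M \ {x}).biUnion fun z => Tm.fv (σ z)) := by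
        intro he; exact Tm.fresh_not_mem _ (he ▸ hwmem)
      simp [Ctx.update, hwy]
  | arrE h1 h2 ih1 ih2 =>
    intro σ Δ hσ
    exact Der.arrE (ih1 _ _ fun z b hz => hσ z b (by simp [Tm.fv, hz]))
      (ih2 _ _ fun z b hz => hσ z b (by simp [Tm.fv, hz]))
  | interI h1 h2 ih1 ih2 => intro σ Δ hσ; exact Der.interI (ih1 _ _ hσ) (ih2 _ _ hσ)
  | sub h hle ih => intro σ Δ hσ; exact Der.sub (ih _ _ hσ) hle

lemma der_unrename {T : ITT A} : ∀ {Γ P a}, Der T Γ P a →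
    ∀ (r : ℕ → ℕ) (N : Tm) (Δ : Ctx A),
      P = Tm.subst (fun z => Tm.var (r z)) N →
      (∀ z ∈ Tm.fv N, Γ (r z) = Δ z) →
      Der T Δ N a := by
  intro Γ P a h
  induction h with
  | ax hx =>
    rename_i x a
    intro r N Δ hP hΔ
    cases N with
    | var z =>
      simp only [Tm.subst] at hP
      injection hP with hrz
      refine Der.ax ?_
      rw [← hΔ z (by simp [Tm.fv]), ← hrz]; exact hx
    | lam y t => simp [Tm.subst] at hP
    | app t u => simp [Tm.subst] at hP
  | top => intro r N Δ _ _; exact Der.top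
  | arrI h ih =>
    rename_i y P₀ a b
    intro r N Δ hP hΔ
    cases N with
    | var z => simp [Tm.subst] at hP
    | app t u => simp [Tm.subst] at hP
    | lam x N₀ =>
      simp only [Tm.subst] at hP
      injection hP with hy hP₀
      refine Der.arrI (ih (fun z => if z = x then y else r z) N₀ (Δ.update x b) ?_ ?_)
      · rw [hP₀]
        congr 1
        funext z
        by_cases hzx : z = x <;> simp [hzx, hy]
      · intro z hz
        by_cases hzx : z = x
        · subst hzx; simp [Ctx.update]
        · simp only [if_neg hzx]
          have hrzS : r z ∈ (Tm.fv N₀ \ {x}).biUnion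
              fun w => Tm.fv ((fun v => Tm.var (r v)) w) :=
            Finset.mem_biUnion.2 ⟨z, by simp [hz, hzx], by simp [Tm.fv]⟩
          have hrzy : r z ≠ y := by
            intro he
            exact Tm.fresh_not_mem _ (by rw [hy] at he; exact he ▸ hrzS)
          simp only [Ctx.update, if_neg hrzy, if_neg hzx]
          exact hΔ z (by simp [Tm.fv, hz, hzx])
  | arrE h1 h2 ih1 ih2 =>
    intro r N Δ hP hΔ
    cases N with
    | var z => simp [Tm.subst] at hP
    | lam y t => simp [Tm.subst] at hP
    | app t u =>
      simp only [Tm.subst] at hP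
      injection hP with h1' h2'
      exact Der.arrE (ih1 r t Δ h1' fun z hz => hΔ z (by simp [Tm.fv, hz]))
        (ih2 r u Δ h2' fun z hz => hΔ z (by simp [Tm.fv, hz]))
  | interI h1 h2 ih1 ih2 =>
    intro r N Δ hP hΔ
    exact Der.interI (ih1 r N Δ hP hΔ) (ih2 r N Δ hP hΔ)
  | sub h hle ih =>
    intro r N Δ hP hΔ
    exact Der.sub (ih r N Δ hP hΔ) hle

lemma der_beta {T : ITT A}
    (H : ∀ (Γ : Ctx A) (x : ℕ) (N : Tm) (b c : Ty A),
        Der T Γ (Tm.lam x N) (Ty.arrow b c) → Der T (Γ.update x b) N c) :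
    ∀ {Γ P a}, Der T Γ P a → ∀ x M N, P = Tm.app (Tm.lam x M) N →
      Der T Γ (Tm.subst1 x N M) a := by
  intro Γ P a h
  induction h with
  | ax hx => intro x M N hP; cases hP
  | top => intro x M N hP; exact Der.top
  | arrI h ih => intro x M N hP; cases hP
  | arrE h1 h2 ih1 ih2 =>
    rename_i Γ P₁ P₂ a b
    intro x M N hP
    injection hP with hP₁ hP₂
    subst hP₁; subst hP₂
    have hM := H Γ x M b a h1
    refine der_subst hM _ _ ?_
    intro z b' hz hzb
    by_cases hzx : z = x
    · subst hzx
      simp only [Ctx.update, if_pos rfl] at hzb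
      injection hzb with hb; subst hb
      simpa using h2
    · simp only [Ctx.update, if_neg hzx] at hzb
      simp only [if_neg hzx]
      exact Der.ax hzb
  | interI h1 h2 ih1 ih2 =>
    intro x M N hP
    exact Der.interI (ih1 x M N hP) (ih2 x M N hP)
  | sub h hle ih =>
    intro x M N hP
    exact Der.sub (ih x M N hP) hle

lemma der_app_congL {T : ITT A} {M M' : Tm}
    (hM : ∀ (Γ : Ctx A) a, Der T Γ M a → Der T Γ M' a) :
    ∀ {Γ P a}, Der T Γ P a → ∀ N, P = Tm.app M N → Der T Γ (Tm.app M' N) a := by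
  intro Γ P a h
  induction h with
  | ax hx => intro N hP; cases hP
  | top => intro N hP; exact Der.top
  | arrI h ih => intro N hP; cases hP
  | arrE h1 h2 ih1 ih2 =>
    intro N hP
    injection hP with hP₁ hP₂
    subst hP₁; subst hP₂
    exact Der.arrE (hM _ _ h1) h2
  | interI h1 h2 ih1 ih2 => intro N hP; exact Der.interI (ih1 N hP) (ih2 N hP)
  | sub h hle ih => intro N hP; exact Der.sub (ih N hP) hle

lemma der_app_congR {T : ITT A} {N N' : Tm}
    (hN : ∀ (Γ : Ctx A) a, Der T Γ N a → Der T Γ N' a) :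
    ∀ {Γ P a}, Der T Γ P a → ∀ M, P = Tm.app M N → Der T Γ (Tm.app M N') a := by
  intro Γ P a h
  induction h with
  | ax hx => intro M hP; cases hP
  | top => intro M hP; exact Der.top
  | arrI h ih => intro M hP; cases hP
  | arrE h1 h2 ih1 ih2 =>
    intro M hP
    injection hP with hP₁ hP₂
    subst hP₁; subst hP₂
    exact Der.arrE h1 (hN _ _ h2)
  | interI h1 h2 ih1 ih2 => intro M hP; exact Der.interI (ih1 M hP) (ih2 M hP)
  | sub h hle ih => intro M hP; exact Der.sub (ih M hP) hle

lemma der_lam_cong {T : ITT A} {M M' : Tm}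
    (hM : ∀ (Γ : Ctx A) a, Der T Γ M a → Der T Γ M' a) :
    ∀ {Γ P a}, Der T Γ P a → ∀ x, P = Tm.lam x M → Der T Γ (Tm.lam x M') a := by
  intro Γ P a h
  induction h with
  | ax hx => intro x hP; cases hP
  | top => intro x hP; exact Der.top
  | arrI h ih =>
    intro x hP
    injection hP with hx hM₀
    subst hx; subst hM₀
    exact Der.arrI (hM _ _ h)
  | arrE h1 h2 ih1 ih2 => intro x hP; cases hP
  | interI h1 h2 ih1 ih2 => intro x hP; exact Der.interI (ih1 x hP) (ih2 x hP)
  | sub h hle ih => intro x hP; exact Der.sub (ih x hP) hle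

/-- Subject reduction holds for the system induced by `𝒯` iff
typability of abstractions inverts: `Γ ⊢ λx.N : B → C` implies
`Γ, x:B ⊢ N : C`. -/
theorem subject_reduction_iff_abs_inversion {A : Type} (T : ITT A) :
    (∀ (Γ : Ctx A) (M M' : Tm) (a : Ty A),
        Tm.Step M M' → Der T Γ M a → Der T Γ M' a) ↔
    (∀ (Γ : Ctx A) (x : ℕ) (N : Tm) (b c : Ty A),
        Der T Γ (Tm.lam x N) (Ty.arrow b c) → Der T (Γ.update x b) N c) := by
  constructor
  · intro SR Γ x N b c h
    have h' : Der T (Γ.update x b) (Tm.lam x N) (Ty.arrow b c) := by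
      refine der_agree h _ ?_
      intro z hz
      simp only [Tm.fv, Finset.mem_sdiff, Finset.mem_singleton] at hz
      simp [Ctx.update, hz.2]
    have happ : Der T (Γ.update x b) (Tm.app (Tm.lam x N) (Tm.var x)) c :=
      Der.arrE h' (Der.ax (by simp [Ctx.update]))
    have h2 := SR _ _ _ _ (Tm.Step.beta x N (Tm.var x)) happ
    have hσ : (fun z => if z = x then Tm.var x else Tm.var z)
        = fun z => Tm.var (id z) := by
      funext z; by_cases hzx : z = x <;> simp [hzx]
    rw [Tm.subst1, hσ] at h2
    exact der_unrename h2 id N _ rfl (fun z _ => rfl)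
  · intro H Γ M M' a hstep
    induction hstep generalizing Γ a with
    | beta x M N => intro hd; exact der_beta H hd x M N rfl
    | appL N hs ih => intro hd; exact der_app_congL ih hd N rfl
    | appR M hs ih => intro hd; exact der_app_congR ih hd M rfl
    | abs x hs ih => intro hd; exact der_lam_cong ih hd x rfl
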